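/- Let A be a (possibly non-unital) associative K-algebra and B : A → A a Reynolds operator, i.e., a linear map satisfying B(x)·B(y) = B(B(x)·y + x·B(y) + B(x)·B(y)) for all x, y ∈ A. Then the bilinear operation on A defined by x ∘ y = B(x)·y + x·B(y) + B(x)·B(y) is associative, i.e., (A, ∘) is an associative algebra. -/
import Mathlib


/-- The product `x ∘ y = B(x)·y + x·B(y) + B(x)·B(y)` induced by a Reynolds operator. -/
def circB {K : Type*} [Field K] {A : Type*} [AddCommGroup A] [Module K A]
    (m : A →ₗ[K] A →ₗ[K] A) (B : A →ₗ[K] A) (x y : A) : A :=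
  m (B x) y + m x (B y) + m (B x) (B y)

/-- if `B : A → A` is a Reynolds operator, then
`x ∘ y = B(x)·y + x·B(y) + B(x)·B(y)` is an associative product on `A`. -/
theorem stmt18 {K : Type*} [Field K] {A : Type*} [AddCommGroup A] [Module K A]
    (m : A →ₗ[K] A →ₗ[K] A)
    (assoc : ∀ x y z : A, m (m x y) z = m x (m y z))
    (B : A →ₗ[K] A)
    (hB : ∀ x y : A, m (B x) (B y) = B (m (B x) y + m x (B y) + m (B x) (B y))) :
    ∀ x y z : A, circB m B (circB m B x y) z = circB m B x (circB m B y z) := by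
  intro x y z
  simp only [circB, ← hB, map_add, LinearMap.add_apply, assoc]
  abel
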